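/- arXiv:1710.08190 — 2 statements merged into one kernel-verified Lean document; each statement's English description precedes it below -/
import Mathlib

section
/- There exist shrinking sequences σ and τ such that: both (2^ℕ, d_σ) and (2^ℕ, d_τ) are doubling, uniformly disconnected, and not uniformly perfect (i.e., have type (1,1,0)); and the ℓ^∞-product metric space (2^ℕ × 2^ℕ, d_σ × d_τ), where (d_σ × d_τ)((x,y),(x',y')) = max{d_σ(x,x'), d_τ(y,y')}, is quasi-symmetrically equivalent to the middle-third Cantor set Γ with the metric induced from ℝ. -/
open Metric Set
open scoped ENNReal NNReal

noncomputable section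

/-- A metric space is doubling if there is `N` such that every closed ball of radius `r`
can be covered by at most `N` closed balls of radius `r / 2`. -/
def IsDoubling (X : Type*) [MetricSpace X] : Prop :=
  ∃ N : ℕ, ∀ (x : X) (r : ℝ), ∃ c : Finset X, c.card ≤ N ∧
    Metric.closedBall x r ⊆ ⋃ y ∈ c, Metric.closedBall y (r / 2)

/-- Every `δ`-chain is trivial (constant). -/
def IsUniformlyDisconnectedWith (X : Type*) [MetricSpace X] (δ : ℝ) : Prop :=
  ∀ (N : ℕ) (x : ℕ → X),
    (∀ i : ℕ, 1 ≤ i → i ≤ N → dist (x (i - 1)) (x i) ≤ δ * dist (x 0) (x N)) →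
    ∀ i ≤ N, x i = x 0

def IsUniformlyDisconnected (X : Type*) [MetricSpace X] : Prop :=
  ∃ δ : ℝ, 0 < δ ∧ δ < 1 ∧ IsUniformlyDisconnectedWith X δ

/-- `ρ`-uniform perfectness. -/
def IsUniformlyPerfectWith (X : Type*) [MetricSpace X] (ρ : ℝ) : Prop :=
  ∀ (x : X) (r : ℝ), 0 < r → r < Metric.diam (Set.univ : Set X) →
    (Metric.closedBall x r \ Metric.ball x (ρ * r)).Nonempty

def IsUniformlyPerfect (X : Type*) [MetricSpace X] : Prop :=
  ∃ ρ : ℝ, 0 < ρ ∧ ρ ≤ 1 ∧ IsUniformlyPerfectWith X ρ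

/-- A metric space has type `(u, v, w) ∈ {0,1}³` (here encoded by `Bool`s) if `u = 1` exactly
when it is doubling, `v = 1` exactly when it is uniformly disconnected, and `w = 1` exactly
when it is uniformly perfect. -/
def HasType (X : Type*) [MetricSpace X] (u v w : Bool) : Prop :=
  (IsDoubling X ↔ u = true) ∧ (IsUniformlyDisconnected X ↔ v = true) ∧
    (IsUniformlyPerfect X ↔ w = true)

/-- `S_D`: points having no doubling neighborhood. -/
def SD (X : Type*) [MetricSpace X] : Set X :=
  {x : X | ∀ s ∈ nhds x, ¬ IsDoubling ↥s}

/-- `S_UD`: points having no uniformly disconnected neighborhood. -/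
def SUD (X : Type*) [MetricSpace X] : Set X :=
  {x : X | ∀ s ∈ nhds x, ¬ IsUniformlyDisconnected ↥s}

/-- `S_UP`: points having no uniformly perfect neighborhood. -/
def SUP (X : Type*) [MetricSpace X] : Set X :=
  {x : X | ∀ s ∈ nhds x, ¬ IsUniformlyPerfect ↥s}

/-- The ternary correspondence map `T(x) = Σ_{i≥1} 2 x_i / 3^i` (indices shifted to start
at `0`). -/
def cantorT (x : ℕ → Bool) : ℝ :=
  ∑' i : ℕ, 2 * (if x i then (1 : ℝ) else 0) / 3 ^ (i + 1)

/-- A Cantor space: a topological space homeomorphic to the middle-third Cantor set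
(`cantorSet` is Mathlib's middle-third Cantor set in `ℝ`). -/
def IsCantorSpace (X : Type*) [TopologicalSpace X] : Prop :=
  Nonempty (X ≃ₜ ↥cantorSet)

/-- The first index at which `x` and `y` differ. -/
def seqV (x y : ℕ → Bool) : ℕ := sInf {n | x n ≠ y n}

-- The standard ultrametric `e(x,y) = 3^{-(v(x,y)+1)}` on `2^ℕ` (indices starting at `0`,
-- corresponding to `3^{-min{n ≥ 1 : x_n ≠ y_n}}` with indices starting at `1`).
open Classical in
def cantorE (x y : ℕ → Bool) : ℝ :=
  if x = y then 0 else (3 : ℝ)⁻¹ ^ (seqV x y + 1)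

/-- A shrinking sequence: positive, non-increasing, converging to `0`. -/
def IsShrinking (α : ℕ → ℝ) : Prop :=
  (∀ n, 0 < α n) ∧ (∀ m n : ℕ, m ≤ n → α n ≤ α m) ∧
    Filter.Tendsto α Filter.atTop (nhds 0)

-- The distance `d_α(x,y) = α (v(x,y))` associated with a sequence `α`.
open Classical in
def seqDist (α : ℕ → ℝ) (x y : ℕ → Bool) : ℝ :=
  if x = y then 0 else α (seqV x y)

lemma seqV_comm (x y : ℕ → Bool) : seqV x y = seqV y x := by
  unfold seqV
  congr 1
  ext n
  exact ne_comm

lemma seqDist_self (α : ℕ → ℝ) (x : ℕ → Bool) : seqDist α x x = 0 := by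
  rw [seqDist, if_pos rfl]

lemma seqDist_of_ne (α : ℕ → ℝ) {x y : ℕ → Bool} (h : x ≠ y) :
    seqDist α x y = α (seqV x y) := by
  rw [seqDist, if_neg h]

lemma seqDist_nonneg {α : ℕ → ℝ} (hα : ∀ n, 0 < α n) (x y : ℕ → Bool) :
    0 ≤ seqDist α x y := by
  rcases eq_or_ne x y with h | h
  · rw [h, seqDist_self]
  · rw [seqDist_of_ne α h]
    exact (hα _).le

lemma min_seqV_le {x y z : ℕ → Bool} (hxz : x ≠ z) :
    min (seqV x y) (seqV y z) ≤ seqV x z := by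
  have hne : {n | x n ≠ z n}.Nonempty := by
    rcases Function.ne_iff.mp hxz with ⟨n, hn⟩
    exact ⟨n, hn⟩
  have hmem : x (seqV x z) ≠ z (seqV x z) := Nat.sInf_mem hne
  rcases ne_or_eq (x (seqV x z)) (y (seqV x z)) with h | h
  · exact le_trans (min_le_left _ _) (Nat.sInf_le h)
  · have h' : y (seqV x z) ≠ z (seqV x z) := by rw [← h]; exact hmem
    exact le_trans (min_le_right _ _) (Nat.sInf_le h')

/-- The sequentially metrized Cantor space `(2^ℕ, d_α)` for a shrinking sequence `α`. -/
def seqMetricSpace (α : ℕ → ℝ) (hα : IsShrinking α) : MetricSpace (ℕ → Bool) where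
  dist := seqDist α
  dist_self x := seqDist_self α x
  dist_comm x y := by
    show seqDist α x y = seqDist α y x
    rcases eq_or_ne x y with h | h
    · rw [h]
    · rw [seqDist_of_ne α h, seqDist_of_ne α h.symm, seqV_comm]
  dist_triangle x y z := by
    show seqDist α x z ≤ seqDist α x y + seqDist α y z
    rcases eq_or_ne x z with hxz | hxz
    · rw [hxz, seqDist_self]
      exact add_nonneg (seqDist_nonneg hα.1 _ _) (seqDist_nonneg hα.1 _ _)
    rcases eq_or_ne x y with hxy | hxy
    · subst hxy
      rw [seqDist_self, zero_add]
    rcases eq_or_ne y z with hyz | hyz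
    · subst hyz
      rw [seqDist_self, add_zero]
    rw [seqDist_of_ne α hxz, seqDist_of_ne α hxy, seqDist_of_ne α hyz]
    have h1 : α (seqV x z) ≤ α (min (seqV x y) (seqV y z)) :=
      hα.2.1 _ _ (min_seqV_le hxz)
    rcases min_cases (seqV x y) (seqV y z) with ⟨he, _⟩ | ⟨he, _⟩
    · rw [he] at h1
      exact h1.trans (le_add_of_nonneg_right (hα.1 _).le)
    · rw [he] at h1
      exact h1.trans (le_add_of_nonneg_left (hα.1 _).le)
  eq_of_dist_eq_zero := by
    intro x y h
    by_contra hne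
    have h' : seqDist α x y = 0 := h
    rw [seqDist_of_ne α hne] at h'
    exact absurd h' (ne_of_gt (hα.1 _))

/-- The Assouad dimension of a metric space. -/
def assouadDim (X : Type*) [MetricSpace X] : ℝ≥0∞ :=
  sInf {d : ℝ≥0∞ | ∃ s : ℝ, 0 < s ∧ d = ENNReal.ofReal s ∧ ∃ K : ℝ, 0 < K ∧
    ∀ ε : ℝ, 0 < ε → ε < 2 → ∀ r : ℝ, 0 < r → ∀ x : X,
      ∃ c : Finset X, (c.card : ℝ) ≤ K * ε ^ (-s) ∧
        Metric.closedBall x r ⊆ ⋃ y ∈ c, Metric.closedBall y (ε * r)}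

/-- The Hausdorff dimension of (the whole of) a metric space. -/
def hausdorffDim (X : Type*) [MetricSpace X] : ℝ≥0∞ := dimH (Set.univ : Set X)

/-- The topology induced by a metric. -/
def metricTopology {X : Type*} (m : MetricSpace X) : TopologicalSpace X :=
  m.toPseudoMetricSpace.toUniformSpace.toTopologicalSpace

/-- `f : X → Y` is quasi-symmetric: for some self-homeomorphism `η` of `[0,∞)`,
`d(f x, f y)/d(f x, f z) ≤ η (d(x,y)/d(x,z))` for all distinct `x, y, z`. -/
def IsQuasiSymmetric {X Y : Type*} [MetricSpace X] [MetricSpace Y] (f : X → Y) : Prop :=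
  ∃ η : Homeomorph (Set.Ici (0 : ℝ)) (Set.Ici (0 : ℝ)),
    ∀ x y z : X, x ≠ y → x ≠ z → y ≠ z →
      dist (f x) (f y) / dist (f x) (f z) ≤
        (η ⟨dist x y / dist x z, div_nonneg dist_nonneg dist_nonneg⟩ : ℝ)

/-- Two metric spaces (given by explicit metric structures) are quasi-symmetrically
equivalent if there is a quasi-symmetric homeomorphism between them. -/
def QSEquiv (X Y : Type*) (mX : MetricSpace X) (mY : MetricSpace Y) : Prop :=
  ∃ f : @Homeomorph X Y (metricTopology mX) (metricTopology mY),
    @IsQuasiSymmetric X Y mX mY f.toEquiv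


/-- The `ℓ^∞`-product metric (the sup metric) on `X × Y`. -/
def prodMetric {X Y : Type*} (mX : MetricSpace X) (mY : MetricSpace Y) :
    MetricSpace (X × Y) :=
  letI := mX; letI := mY; Prod.metricSpaceMax


/-!
Interleave the digits of a pair `(x, y)` into one sequence `z`, sending `x` to the positions
`m` with `⌊log₂ (m + 1)⌋` even and `y` to the others. With `a` and `b` the increasing
enumerations of these two sets of positions, put `σ n = 3^{-(a n + 1)}` and
`τ n = 3^{-(b n + 1)}`. Then `max (d_σ(x, x'), d_τ(y, y')) = 3^{-(v(z, z') + 1)}`, so the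
interleaving followed by the ternary map `z ↦ Σ 2 z_i 3^{-(i+1)}` is a bi-Lipschitz (hence
quasi-symmetric) bijection of the product onto `Γ`. Each factor is ultrametric and doubling
since `σ (n + 1) ≤ σ n / 3`, but not uniformly perfect: both sets of positions contain
arbitrarily long dyadic blocks, so `σ (n + 1) / σ n` is not bounded below.
-/

open Real (ofDigits ofDigitsTerm ofDigits_nonneg ofDigits_le_one ofDigits_eq_sum_add_ofDigits)
open Nat (nth count)

section FirstDifference

variable {x y : ℕ → Bool}

lemma seqV_spec (h : x ≠ y) : x (seqV x y) ≠ y (seqV x y) :=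
  Nat.sInf_mem (Function.ne_iff.mp h)

lemma eq_of_lt_seqV {i : ℕ} (h : i < seqV x y) : x i = y i :=
  not_not.mp (Nat.notMem_of_lt_sInf h)

lemma seqV_le_of_ne {i : ℕ} (h : x i ≠ y i) : seqV x y ≤ i := Nat.sInf_le h

end FirstDifference

lemma IsShrinking.antitone {α : ℕ → ℝ} (hα : IsShrinking α) : Antitone α :=
  fun m n h => hα.2.1 m n h

lemma IsShrinking.comp_strictMono {α : ℕ → ℝ} (hα : IsShrinking α) {c : ℕ → ℕ}
    (hc : StrictMono c) : IsShrinking (α ∘ c) :=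
  ⟨fun n => hα.1 (c n), fun _ _ h => hα.2.1 _ _ (hc.monotone h), hα.2.2.comp hc.tendsto_atTop⟩

section SeqDist

variable {α : ℕ → ℝ} {x y : ℕ → Bool}

lemma seqDist_mem_insert_range (α : ℕ → ℝ) (x y : ℕ → Bool) :
    seqDist α x y ∈ insert 0 (range α) := by
  rcases eq_or_ne x y with rfl | h
  · exact .inl (seqDist_self α x)
  · exact .inr ⟨_, (seqDist_of_ne α h).symm⟩

lemma le_seqDist_of_ne (hα : Antitone α) {i : ℕ} (h : x i ≠ y i) : α i ≤ seqDist α x y := by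
  rw [seqDist_of_ne α fun e => h (congrFun e i)]
  exact hα (seqV_le_of_ne h)

lemma eq_of_seqDist_lt (hα : Antitone α) {i : ℕ} (h : seqDist α x y < α i) : x i = y i :=
  not_not.mp fun hne => (le_seqDist_of_ne hα hne).not_gt h

lemma seqDist_le_of_eqOn (hα : IsShrinking α) {k : ℕ} (h : ∀ i < k, x i = y i) :
    seqDist α x y ≤ α k := by
  rcases eq_or_ne x y with rfl | hne
  · rw [seqDist_self]; exact (hα.1 k).le
  · rw [seqDist_of_ne α hne]
    exact hα.antitone (not_lt.mp fun hv => seqV_spec hne (h _ hv))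

lemma seqDist_comp_le_iff (hα : StrictAnti α) (hα0 : ∀ n, 0 < α n) {c : ℕ → ℕ}
    (hc : StrictMono c) (k : ℕ) : seqDist (α ∘ c) x y ≤ α k ↔ ∀ n, c n < k → x n = y n := by
  rcases eq_or_ne x y with rfl | hne
  · simp [seqDist_self, (hα0 k).le]
  rw [seqDist_of_ne _ hne, Function.comp_apply, hα.le_iff_ge]
  refine ⟨fun hk n hn => eq_of_lt_seqV (hc.lt_iff_lt.mp (hn.trans_le hk)), fun h => ?_⟩
  by_contra! hlt
  exact seqV_spec hne (h _ hlt)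

lemma seqDist_le_iff (hα : StrictAnti α) (hα0 : ∀ n, 0 < α n) (k : ℕ) :
    seqDist α x y ≤ α k ↔ ∀ i < k, x i = y i := by
  simpa using seqDist_comp_le_iff hα hα0 strictMono_id k (x := x) (y := y)

lemma le_of_forall_le_apply_imp (hα : StrictAnti α) (hα0 : ∀ n, 0 < α n) {u v : ℝ}
    (hu : u ∈ insert 0 (range α)) (hv : v ∈ insert 0 (range α))
    (h : ∀ k, v ≤ α k → u ≤ α k) : u ≤ v := by
  obtain rfl | ⟨j, rfl⟩ := hv
  · obtain rfl | ⟨j, rfl⟩ := hu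
    · rfl
    · exact absurd (h (j + 1) (hα0 _).le) (hα j.lt_succ_self).not_ge
  · exact h j le_rfl

end SeqDist

lemma isUniformlyDisconnectedWith_of_isUltrametricDist {X : Type*} [MetricSpace X]
    [IsUltrametricDist X] {δ : ℝ} (hδ0 : 0 ≤ δ) (hδ1 : δ < 1) :
    IsUniformlyDisconnectedWith X δ := by
  intro N x hchain
  have hnear : ∀ i ≤ N, dist (x 0) (x i) ≤ δ * dist (x 0) (x N) := by
    intro i hi
    induction i with
    | zero => rw [dist_self]; positivity
    | succ i ih =>
      exact (IsUltrametricDist.dist_triangle_max _ (x i) _).trans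
        (max_le (ih (by omega)) (hchain (i + 1) (by omega) hi))
  have hend : dist (x 0) (x N) = 0 := by
    nlinarith [hnear N le_rfl, dist_nonneg (x := x 0) (y := x N)]
  intro i hi
  induction i with
  | zero => rfl
  | succ i ih =>
    have hstep := hchain (i + 1) (by omega) hi
    rw [hend, mul_zero, Nat.add_sub_cancel] at hstep
    exact (dist_le_zero.mp hstep).symm.trans (ih (by omega))

section SeqMetricSpace

variable {α : ℕ → ℝ} (hα : IsShrinking α)

lemma isUltrametricDist_seqMetricSpace :
    @IsUltrametricDist (ℕ → Bool) (seqMetricSpace α hα).toDist := by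
  let := seqMetricSpace α hα
  refine ⟨fun x y z => ?_⟩
  show seqDist α x z ≤ max (seqDist α x y) (seqDist α y z)
  rcases eq_or_ne x z with rfl | hxz
  · rw [seqDist_self]
    exact le_max_of_le_left (seqDist_nonneg hα.1 _ _)
  rcases eq_or_ne x y with rfl | hxy
  · rw [seqDist_self]; exact le_max_right _ _
  rcases eq_or_ne y z with rfl | hyz
  · rw [seqDist_self]; exact le_max_left _ _
  rw [seqDist_of_ne α hxz, seqDist_of_ne α hxy, seqDist_of_ne α hyz, ← hα.antitone.map_min]
  exact hα.antitone (min_seqV_le hxz)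

lemma isDoubling_seqMetricSpace (hhalf : ∀ n, 2 * α (n + 1) ≤ α n) :
    @IsDoubling (ℕ → Bool) (seqMetricSpace α hα) := by
  let := seqMetricSpace α hα
  classical
  refine ⟨2, fun x r => ?_⟩
  rcases le_or_gt r 0 with hr | hr
  · refine ⟨{x}, by simp, fun z hz => ?_⟩
    simpa using closedBall_subset_closedBall (by linarith) hz
  have hex : ∃ n, α n ≤ r := (hα.2.2.eventually_le_const hr).exists
  set k := Nat.find hex
  -- the ball of radius `r` is the cylinder of the first `k` digits of `x`, and it splits into
  -- two cylinders of length `k + 1`, each of diameter `α (k + 1) ≤ α k / 2 ≤ r / 2`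
  have hcyl : ∀ y z : ℕ → Bool, (∀ i < k + 1, z i = y i) → z ∈ closedBall y (r / 2) :=
    fun y z h => (seqDist_le_of_eqOn hα h).trans (by linarith [hhalf k, Nat.find_spec hex])
  set x' := Function.update x k (!x k) with hx'
  refine ⟨{x, x'}, Finset.card_le_two, fun z hz => ?_⟩
  have hagree : ∀ i < k, z i = x i := fun i hi =>
    eq_of_seqDist_lt hα.antitone ((mem_closedBall.mp hz).trans_lt
      (not_le.mp (Nat.find_min hex hi)))
  simp only [Finset.mem_insert, Finset.mem_singleton, mem_iUnion, exists_prop,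
    exists_eq_or_imp, exists_eq_left]
  by_cases hzk : z k = x k
  · exact .inl (hcyl x z fun i hi => (Nat.lt_succ_iff_lt_or_eq.mp hi).elim (hagree i) (· ▸ hzk))
  · refine .inr (hcyl x' z fun i hi => ?_)
    rcases Nat.lt_succ_iff_lt_or_eq.mp hi with hi | rfl
    · rw [hx', Function.update_of_ne hi.ne]; exact hagree i hi
    · rw [hx', Function.update_self]; revert hzk; cases z k <;> cases x k <;> simp

lemma not_isUniformlyPerfect_seqMetricSpace (hgap : ∀ ε > 0, ∃ n, α (n + 1) < ε * α n) :
    ¬ @IsUniformlyPerfect (ℕ → Bool) (seqMetricSpace α hα) := by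
  let := seqMetricSpace α hα
  rintro ⟨ρ, hρ, -, hUP⟩
  obtain ⟨n, hn⟩ := hgap (ρ / 2) (by positivity)
  let x : ℕ → Bool := fun _ => false
  have hbdd : Bornology.IsBounded (univ : Set (ℕ → Bool)) :=
    isBounded_iff.2 ⟨α 0, fun u _ v _ => seqDist_le_of_eqOn hα (k := 0) (by simp)⟩
  have hdiam : α n ≤ diam (univ : Set (ℕ → Bool)) :=
    (le_seqDist_of_ne hα.antitone (x := x) (y := Function.update x n true) (by simp [x])).trans
      (dist_le_diam_of_mem hbdd trivial trivial)
  have hαn := hα.1 n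
  obtain ⟨y, hyr, hyρ⟩ := hUP x (α n / 2) (by positivity) (by linarith)
  have hagree : ∀ i < n + 1, y i = x i := fun i hi =>
    eq_of_seqDist_lt hα.antitone ((mem_closedBall.mp hyr).trans_lt
      (by linarith [hα.antitone (Nat.lt_succ_iff.mp hi)]))
  refine hyρ (mem_ball.2 ?_)
  calc dist y x ≤ α (n + 1) := seqDist_le_of_eqOn hα hagree
    _ < ρ / 2 * α n := hn
    _ = ρ * (α n / 2) := by ring

lemma hasType_seqMetricSpace (hhalf : ∀ n, 2 * α (n + 1) ≤ α n)
    (hgap : ∀ ε > 0, ∃ n, α (n + 1) < ε * α n) :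
    @HasType (ℕ → Bool) (seqMetricSpace α hα) true true false := by
  let := seqMetricSpace α hα
  have := isUltrametricDist_seqMetricSpace hα
  exact ⟨iff_of_true (isDoubling_seqMetricSpace hα hhalf) rfl,
    iff_of_true ⟨1 / 2, by norm_num, by norm_num,
      isUniformlyDisconnectedWith_of_isUltrametricDist (by norm_num) (by norm_num)⟩ rfl,
    iff_of_false (not_isUniformlyPerfect_seqMetricSpace hα hgap) Bool.false_ne_true⟩

end SeqMetricSpace

def cantorScale (n : ℕ) : ℝ := (3 : ℝ)⁻¹ ^ (n + 1)

lemma cantorScale_pos (n : ℕ) : 0 < cantorScale n := by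
  unfold cantorScale; positivity

lemma cantorScale_strictAnti : StrictAnti cantorScale := fun _ _ h =>
  pow_lt_pow_right_of_lt_one₀ (by norm_num) (by norm_num) (Nat.succ_lt_succ h)

lemma cantorScale_add (n C : ℕ) : cantorScale (n + C) = (3 : ℝ)⁻¹ ^ C * cantorScale n := by
  rw [cantorScale, cantorScale, add_right_comm, pow_add, mul_comm]

lemma isShrinking_cantorScale : IsShrinking cantorScale :=
  ⟨cantorScale_pos, fun _ _ h => cantorScale_strictAnti.antitone h,
    (tendsto_pow_atTop_nhds_zero_of_lt_one (by norm_num) (by norm_num)).comp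
      (Filter.tendsto_add_atTop_nat 1)⟩

lemma exists_cantorScale_comp_succ_lt {c : ℕ → ℕ} (hgap : ∀ C, ∃ n, c n + C ≤ c (n + 1)) {ε : ℝ}
    (hε : 0 < ε) : ∃ n, cantorScale (c (n + 1)) < ε * cantorScale (c n) := by
  obtain ⟨C, hC⟩ := exists_pow_lt_of_lt_one hε (show (3 : ℝ)⁻¹ < 1 by norm_num)
  obtain ⟨n, hn⟩ := hgap C
  refine ⟨n, (cantorScale_strictAnti.antitone hn).trans_lt ?_⟩
  rw [cantorScale_add]
  exact mul_lt_mul_of_pos_right hC (cantorScale_pos _)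

section CantorScaleComp

variable {c : ℕ → ℕ} (hc : StrictMono c)
include hc

lemma two_mul_cantorScale_comp_succ_le (n : ℕ) :
    2 * cantorScale (c (n + 1)) ≤ cantorScale (c n) := by
  have h := cantorScale_strictAnti.antitone (hc (Nat.lt_succ_self n))
  rw [cantorScale_add (c n) 1] at h
  linarith [cantorScale_pos (c n)]

lemma hasType_cantorScale_comp (hgap : ∀ C, ∃ n, c n + C ≤ c (n + 1)) :
    @HasType (ℕ → Bool) (seqMetricSpace _ (isShrinking_cantorScale.comp_strictMono hc))
      true true false :=
  hasType_seqMetricSpace _ (two_mul_cantorScale_comp_succ_le hc)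
    fun _ hε => exists_cantorScale_comp_succ_lt hgap hε

end CantorScaleComp

lemma exists_nth_add_le_nth_succ {P : ℕ → Prop} [DecidablePred P] (hP : (Set.ofPred P).Infinite)
    {m C : ℕ} (hm : P m) (hrun : ∀ i < C, ¬ P (m + 1 + i)) :
    ∃ n, nth P n + C ≤ nth P (n + 1) := by
  refine ⟨count P m, ?_⟩
  have hlt : m < nth P (count P m + 1) := by
    simpa [Nat.nth_count hm] using (Nat.nth_lt_nth hP).2 (Nat.lt_succ_self (count P m))
  rw [Nat.nth_count hm]
  by_contra! h
  refine hrun (nth P (count P m + 1) - (m + 1)) (by omega) ?_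
  rw [Nat.add_sub_cancel' hlt]
  exact Nat.nth_mem_of_infinite hP _

section DyadicBlocks

lemma log_two_pow_add {k i : ℕ} (hi : i < 2 ^ k) : Nat.log 2 (2 ^ k + i) = k :=
  Nat.log_eq_of_pow_le_of_lt_pow (by omega) (by rw [pow_succ]; omega)

variable {Q : ℕ → Prop} [DecidablePred Q]

/-- `m = 2 ^ (k + 1) - 2` is the last point `m` with `⌊log₂ (m + 1)⌋ = k`, and the next
`2 ^ (k + 1)` points have `⌊log₂ (m + 1)⌋ = k + 1`. -/
lemma infinite_and_gaps_of_log_two (hQ : ∀ j, ∃ k ≥ j, Q k ∧ ¬ Q (k + 1)) :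
    (Set.ofPred fun m => Q (Nat.log 2 (m + 1))).Infinite ∧
      ∀ C, ∃ n, nth (fun m => Q (Nat.log 2 (m + 1))) n + C ≤
        nth (fun m => Q (Nat.log 2 (m + 1))) (n + 1) := by
  have hlast : ∀ k, Nat.log 2 (2 ^ (k + 1) - 2 + 1) = k := fun k => by
    have : 2 ^ (k + 1) - 2 + 1 = 2 ^ k + (2 ^ k - 1) := by
      rw [pow_succ]; have := k.one_le_two_pow; omega
    rw [this, log_two_pow_add (by have := k.one_le_two_pow; omega)]
  have hlarge : ∀ k, k ≤ 2 ^ (k + 1) - 2 := fun k => by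
    have := Nat.lt_two_pow_self (n := k + 1); rw [pow_succ] at this ⊢; omega
  have hinf : (Set.ofPred fun m => Q (Nat.log 2 (m + 1))).Infinite := by
    refine Set.infinite_of_forall_exists_gt fun a => ?_
    obtain ⟨k, hk, hQk, -⟩ := hQ (a + 1)
    exact ⟨2 ^ (k + 1) - 2, by rw [Set.mem_ofPred_eq, hlast]; exact hQk,
      by have := hlarge k; omega⟩
  refine ⟨hinf, fun C => ?_⟩
  obtain ⟨k, hk, hQk, hQk'⟩ := hQ C
  refine exists_nth_add_le_nth_succ hinf (m := 2 ^ (k + 1) - 2) (by simpa [hlast] using hQk)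
    fun i hi => ?_
  have : 2 ^ (k + 1) - 2 + 1 + i + 1 = 2 ^ (k + 1) + i := by have := hlarge k; omega
  simp only [this]
  rwa [log_two_pow_add (by have := hlarge k; have := Nat.lt_two_pow_self (n := k + 1); omega)]

end DyadicBlocks

section Interleave

variable (P : ℕ → Prop) [DecidablePred P]

def interleave (p : (ℕ → Bool) × (ℕ → Bool)) (m : ℕ) : Bool :=
  if P m then p.1 (count P m) else p.2 (count (fun m => ¬ P m) m)

variable {P}

lemma interleave_nth_left (hP : (Set.ofPred P).Infinite) (p : (ℕ → Bool) × (ℕ → Bool)) (n : ℕ) :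
    interleave P p (nth P n) = p.1 n := by
  simp [interleave, Nat.nth_mem_of_infinite hP, Nat.count_nth_of_infinite hP]

lemma interleave_nth_right (hP' : (Set.ofPred fun m => ¬ P m).Infinite) (p : (ℕ → Bool) × (ℕ → Bool)) (n : ℕ) :
    interleave P p (nth (fun m => ¬ P m) n) = p.2 n := by
  simp [interleave, Nat.nth_mem_of_infinite hP', Nat.count_nth_of_infinite hP']

variable (hP : (Set.ofPred P).Infinite) (hP' : (Set.ofPred fun m => ¬ P m).Infinite)
include hP hP'

def interleaveEquiv : ((ℕ → Bool) × (ℕ → Bool)) ≃ (ℕ → Bool) where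
  toFun := interleave P
  invFun z := (z ∘ nth P, z ∘ nth fun m => ¬ P m)
  left_inv p := Prod.ext (funext (interleave_nth_left hP p)) (funext (interleave_nth_right hP' p))
  right_inv z := funext fun m => by
    by_cases h : P m <;> simp [interleave, h, Nat.nth_count]

lemma forall_lt_interleave_eq_iff (p q : (ℕ → Bool) × (ℕ → Bool)) (k : ℕ) :
    (∀ i < k, interleave P p i = interleave P q i) ↔
      (∀ n, nth P n < k → p.1 n = q.1 n) ∧ (∀ n, nth (fun m => ¬ P m) n < k → p.2 n = q.2 n) := by
  refine ⟨fun h => ⟨fun n hn => ?_, fun n hn => ?_⟩, fun ⟨h₁, h₂⟩ i hi => ?_⟩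
  · simpa [interleave_nth_left hP] using h _ hn
  · simpa [interleave_nth_right hP'] using h _ hn
  · by_cases hPi : P i
    · simp only [interleave, if_pos hPi]
      exact h₁ _ ((Nat.nth_count hPi).symm ▸ hi)
    · simp only [interleave, if_neg hPi]
      exact h₂ _ ((Nat.nth_count (p := fun m => ¬ P m) hPi).symm ▸ hi)

/-- Both sides are `0` or a value of `α`, and they lie below the same values `α k`. -/
lemma max_seqDist_eq_seqDist_interleave {α : ℕ → ℝ} (hα : StrictAnti α) (hα0 : ∀ n, 0 < α n)
    (p q : (ℕ → Bool) × (ℕ → Bool)) :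
    max (seqDist (α ∘ nth P) p.1 q.1) (seqDist (α ∘ nth fun m => ¬ P m) p.2 q.2) =
      seqDist α (interleave P p) (interleave P q) := by
  set d := max (seqDist (α ∘ nth P) p.1 q.1) (seqDist (α ∘ nth fun m => ¬ P m) p.2 q.2)
  have hle : ∀ k, d ≤ α k ↔ seqDist α (interleave P p) (interleave P q) ≤ α k := fun k => by
    rw [max_le_iff, seqDist_comp_le_iff hα hα0 (Nat.nth_strictMono hP),
      seqDist_comp_le_iff hα hα0 (Nat.nth_strictMono hP'), seqDist_le_iff hα hα0,
      forall_lt_interleave_eq_iff hP hP']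
  have hcomp : ∀ (c : ℕ → ℕ) (x y : ℕ → Bool), seqDist (α ∘ c) x y ∈ insert 0 (range α) :=
    fun c x y => insert_subset_insert (range_comp_subset_range c α) (seqDist_mem_insert_range _ x y)
  have hd : d ∈ insert 0 (range α) := by
    rcases max_choice (seqDist (α ∘ nth P) p.1 q.1) (seqDist (α ∘ nth fun m => ¬ P m) p.2 q.2)
      with h | h <;> rw [show d = _ from h] <;> exact hcomp _ _ _
  exact le_antisymm
    (le_of_forall_le_apply_imp hα hα0 hd (seqDist_mem_insert_range _ _ _) fun k => (hle k).2)
    (le_of_forall_le_apply_imp hα hα0 (seqDist_mem_insert_range _ _ _) hd fun k => (hle k).1)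

end Interleave

section Ternary

lemma coe_cantorSetEquivNatToBool_symm (z : ℕ → Bool) :
    (cantorSetEquivNatToBool.symm z : ℝ) = ofDigits fun i => cond (z i) (2 : Fin 3) 0 := rfl

lemma inv_three_le_abs_ofDigits_sub {z w : ℕ → Bool} (h : z 0 ≠ w 0) :
    3⁻¹ ≤ |ofDigits (fun i => cond (z i) (2 : Fin 3) 0) -
      ofDigits fun i => cond (w i) (2 : Fin 3) 0| := by
  rw [ofDigits_eq_sum_add_ofDigits (fun i => cond (z i) (2 : Fin 3) 0) 1,
    ofDigits_eq_sum_add_ofDigits (fun i => cond (w i) (2 : Fin 3) 0) 1]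
  obtain ⟨ha0, ha1⟩ := And.intro (ofDigits_nonneg fun i => cond (z (i + 1)) (2 : Fin 3) 0)
    (ofDigits_le_one fun i => cond (z (i + 1)) (2 : Fin 3) 0)
  obtain ⟨hb0, hb1⟩ := And.intro (ofDigits_nonneg fun i => cond (w (i + 1)) (2 : Fin 3) 0)
    (ofDigits_le_one fun i => cond (w (i + 1)) (2 : Fin 3) 0)
  simp only [Finset.sum_range_one, ofDigitsTerm, zero_add, pow_one, Nat.cast_ofNat]
  revert h
  cases z 0 <;> cases w 0 <;> simp <;> rw [le_abs] <;> first | (left; linarith) | (right; linarith)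

lemma cantorE_le_dist_cantorSetEquivNatToBool_symm (z w : ℕ → Bool) :
    cantorE z w ≤ dist (cantorSetEquivNatToBool.symm z) (cantorSetEquivNatToBool.symm w) := by
  rcases eq_or_ne z w with rfl | hne
  · simp [cantorE]
  set v := seqV z w
  have hprefix : ∑ i ∈ Finset.range v, ofDigitsTerm (fun i => cond (z i) (2 : Fin 3) 0) i =
      ∑ i ∈ Finset.range v, ofDigitsTerm (fun i => cond (w i) (2 : Fin 3) 0) i :=
    Finset.sum_congr rfl fun i hi => by simp [ofDigitsTerm, eq_of_lt_seqV (Finset.mem_range.mp hi)]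
  rw [Subtype.dist_eq, Real.dist_eq, coe_cantorSetEquivNatToBool_symm,
    coe_cantorSetEquivNatToBool_symm, ofDigits_eq_sum_add_ofDigits _ v,
    ofDigits_eq_sum_add_ofDigits (fun i => cond (w i) (2 : Fin 3) 0) v, hprefix,
    add_sub_add_left_eq_sub, ← mul_sub, abs_mul, abs_of_pos (by positivity), cantorE,
    if_neg hne, pow_succ, Nat.cast_ofNat, inv_pow]
  exact mul_le_mul_of_nonneg_left
    (inv_three_le_abs_ofDigits_sub (z := fun i => z (i + v)) (w := fun i => w (i + v))
      (by simpa using seqV_spec hne)) (by positivity)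

lemma dist_cantorSetEquivNatToBool_symm_le (z w : ℕ → Bool) :
    dist (cantorSetEquivNatToBool.symm z) (cantorSetEquivNatToBool.symm w) ≤ 3 * cantorE z w := by
  rcases eq_or_ne z w with rfl | hne
  · simp [cantorE]
  rw [Subtype.dist_eq, Real.dist_eq, coe_cantorSetEquivNatToBool_symm,
    coe_cantorSetEquivNatToBool_symm, cantorE, if_neg hne]
  calc _ ≤ (((3 : ℕ) : ℝ) ^ seqV z w)⁻¹ :=
        Real.abs_ofDigits_sub_ofDigits_le fun i hi => by simp [eq_of_lt_seqV hi]
    _ = 3 * (3 : ℝ)⁻¹ ^ (seqV z w + 1) := by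
        rw [Nat.cast_ofNat, pow_succ, inv_pow, mul_comm, mul_assoc, inv_mul_cancel₀ three_ne_zero,
          mul_one]

end Ternary

def mulLeftIci (c : ℝ) (hc : 0 < c) : Ici (0 : ℝ) ≃ₜ Ici (0 : ℝ) :=
  (Homeomorph.mulLeft₀ c hc.ne').subtype fun t => by
    simp [mem_Ici, mul_nonneg_iff_of_pos_left hc]

lemma qsEquiv_of_lipschitzWith {X Y : Type*} [mX : MetricSpace X] [mY : MetricSpace Y]
    (e : X ≃ Y) {K L : ℝ≥0} (hK : 0 < K) (hL : 0 < L) (he : LipschitzWith K e)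
    (he' : LipschitzWith L e.symm) : QSEquiv X Y mX mY := by
  refine ⟨⟨e, he.continuous, he'.continuous⟩, mulLeftIci (K * L) (by positivity),
    fun x y z _ hxz _ => ?_⟩
  change dist (e x) (e y) / dist (e x) (e z) ≤ K * L * (dist x y / dist x z)
  have hlow : dist x z / L ≤ dist (e x) (e z) := by
    rw [div_le_iff₀' (by exact_mod_cast hL)]
    simpa using he'.dist_le_mul (e x) (e z)
  calc dist (e x) (e y) / dist (e x) (e z) ≤ K * dist x y / (dist x z / L) :=
        div_le_div₀ (by positivity) (he.dist_le_mul x y)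
          (div_pos (dist_pos.2 hxz) (by exact_mod_cast hL)) hlow
    _ = K * L * (dist x y / dist x z) := by field_simp

lemma qsEquiv_prod_interleave_cantorSet {P : ℕ → Prop} [DecidablePred P]
    (hP : (Set.ofPred P).Infinite) (hP' : (Set.ofPred fun m => ¬ P m).Infinite) :
    QSEquiv ((ℕ → Bool) × (ℕ → Bool)) ↥cantorSet
      (prodMetric
        (seqMetricSpace _ (isShrinking_cantorScale.comp_strictMono (Nat.nth_strictMono hP)))
        (seqMetricSpace _ (isShrinking_cantorScale.comp_strictMono (Nat.nth_strictMono hP'))))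
      inferInstance := by
  let := prodMetric
    (seqMetricSpace _ (isShrinking_cantorScale.comp_strictMono (Nat.nth_strictMono hP)))
    (seqMetricSpace _ (isShrinking_cantorScale.comp_strictMono (Nat.nth_strictMono hP')))
  let Φ := (interleaveEquiv hP hP').trans cantorSetEquivNatToBool.symm
  have hdist : ∀ p q, dist p q = cantorE (interleave P p) (interleave P q) :=
    max_seqDist_eq_seqDist_interleave hP hP' cantorScale_strictAnti cantorScale_pos
  refine qsEquiv_of_lipschitzWith Φ (K := 3) (L := 1) (by norm_num) one_pos
    (.of_dist_le_mul fun p q => ?_) (.of_dist_le_mul fun u v => ?_)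
  · rw [hdist]
    exact dist_cantorSetEquivNatToBool_symm_le _ _
  · obtain ⟨p, rfl⟩ := Φ.surjective u
    obtain ⟨q, rfl⟩ := Φ.surjective v
    rw [Φ.symm_apply_apply, Φ.symm_apply_apply, NNReal.coe_one, one_mul, hdist]
    exact cantorE_le_dist_cantorSetEquivNatToBool_symm _ _

theorem statement_17 :
    ∃ (σ τ : ℕ → ℝ) (hσ : IsShrinking σ) (hτ : IsShrinking τ),
      @HasType (ℕ → Bool) (seqMetricSpace σ hσ) true true false ∧
      @HasType (ℕ → Bool) (seqMetricSpace τ hτ) true true false ∧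
      QSEquiv ((ℕ → Bool) × (ℕ → Bool)) ↥cantorSet
        (prodMetric (seqMetricSpace σ hσ) (seqMetricSpace τ hτ)) inferInstance := by
  obtain ⟨hA, hgapA⟩ := infinite_and_gaps_of_log_two (Q := Even)
    fun j => ⟨2 * j, by omega, even_two_mul j, by simp⟩
  obtain ⟨hB, hgapB⟩ := infinite_and_gaps_of_log_two (Q := fun k => ¬ Even k)
    fun j => ⟨2 * j + 1, by omega, by simp, not_not.mpr ⟨j + 1, by omega⟩⟩
  exact ⟨_, _, _, _, hasType_cantorScale_comp (Nat.nth_strictMono hA) hgapA,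
    hasType_cantorScale_comp (Nat.nth_strictMono hB) hgapB,
    qsEquiv_prod_interleave_cantorSet hA hB⟩

end
end

section
/- There exists a shrinking sequence θ such that the metric space (2^ℕ, d_θ) has Hausdorff dimension 0 and Assouad dimension 1. -/
open Metric Set
open scoped ENNReal NNReal

noncomputable section

/-! Take `θ n = 2 ^ -(n + ⌊√n⌋⁴)`. Cylinders of length `n` are exactly the closed `θ n`-balls.
Since `θ (n + 1) ≤ θ n / 2`, a ball of radius `r` is a cylinder of length `n` with `θ n ≤ r`,
and it splits into `2 ^ j ≤ 2 / ε` cylinders of length `n + j`, which are balls of radius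
`≤ ε r`: Assouad dimension `≤ 1`. On the block `[k², k² + k]`, `θ` halves exactly at each step,
so covering a `θ (k²)`-ball by `2 ^ -k θ (k²)`-balls needs `2 ^ k` of them: Assouad dimension
`≥ 1`. Finally the `2 ^ (k²)` cylinders of length `k²` have diameter `2 ^ -(k² + k⁴)`, so every
`d`-dimensional Hausdorff measure vanishes. -/

open Filter Topology PiNat

namespace PiNat

variable {E : Type*} [Fintype E]

theorem exists_finset_cylinder_cover (x : ℕ → E) (n k : ℕ) :
    ∃ c : Finset (ℕ → E), c.card ≤ Fintype.card E ^ k ∧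
      cylinder x n ⊆ ⋃ z ∈ c, cylinder z (n + k) := by
  classical
  induction k with
  | zero => exact ⟨{x}, by simp, by simp⟩
  | succ k ih =>
    obtain ⟨c, hc, hcov⟩ := ih
    refine ⟨c.biUnion fun z => Finset.univ.image fun b => Function.update z (n + k) b, ?_, ?_⟩
    · calc _ ≤ ∑ z ∈ c, (Finset.univ.image fun b => Function.update z (n + k) b).card :=
            Finset.card_biUnion_le
        _ ≤ ∑ _z ∈ c, Fintype.card E := Finset.sum_le_sum fun z _ => Finset.card_image_le
        _ ≤ Fintype.card E ^ (k + 1) := by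
            rw [Finset.sum_const, smul_eq_mul, pow_succ]; gcongr
    · intro y hy
      obtain ⟨z, hz, hyz⟩ := Set.mem_iUnion₂.1 (hcov hy)
      refine Set.mem_iUnion₂.2 ⟨Function.update z (n + k) (y (n + k)), ?_, fun i hi => ?_⟩
      · exact Finset.mem_biUnion.2 ⟨z, hz, Finset.mem_image_of_mem _ (Finset.mem_univ _)⟩
      · rcases eq_or_ne i (n + k) with rfl | hne
        · simp
        · rw [Function.update_of_ne hne]
          exact hyz i (by omega)

theorem card_pow_le_card_of_cylinder_cover {x : ℕ → E} {n k : ℕ} {c : Finset (ℕ → E)}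
    (hcov : cylinder x n ⊆ ⋃ z ∈ c, cylinder z (n + k)) :
    Fintype.card E ^ k ≤ c.card := by
  classical
  let window : (ℕ → E) → Fin k → E := fun y j => y (n + j)
  have hsurj : ∀ σ : Fin k → E, σ ∈ c.image window := by
    intro σ
    let y : ℕ → E := fun i => if h : n ≤ i ∧ i < n + k then σ ⟨i - n, by omega⟩ else x i
    have hy : y ∈ cylinder x n := fun i hi => dif_neg (by omega)
    obtain ⟨z, hz, hyz⟩ := Set.mem_iUnion₂.1 (hcov hy)
    refine Finset.mem_image.2 ⟨z, hz, funext fun j => ?_⟩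
    change z (n + j) = σ j
    rw [← hyz (n + j) (by omega)]
    simp [y]
  calc Fintype.card E ^ k = (Finset.univ : Finset (Fin k → E)).card := by simp
    _ ≤ (c.image window).card := Finset.card_le_card fun σ _ => hsurj σ
    _ ≤ c.card := Finset.card_image_le

end PiNat

section SeqDist

variable {α : ℕ → ℝ} {x y : ℕ → Bool}

theorem apply_eq_of_seqDist_lt (hα : Antitone α) {i : ℕ} (h : seqDist α y x < α i) :
    y i = x i := by
  by_contra hne
  rw [seqDist_of_ne α fun hxy => hne (congrFun hxy i)] at h
  exact (hα (Nat.sInf_le hne)).not_gt h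

theorem seqDist_le_of_mem_cylinder (hα : Antitone α) {n : ℕ} (hα₀ : 0 ≤ α n)
    (h : y ∈ cylinder x n) : seqDist α y x ≤ α n := by
  rcases eq_or_ne y x with rfl | hne
  · rwa [seqDist_self]
  rw [seqDist_of_ne α hne]
  refine hα (not_lt.1 fun hlt => ?_)
  exact Nat.sInf_mem (Function.ne_iff.1 hne) (h _ hlt)

end SeqDist

section Assouad

variable (X : Type*) [MetricSpace X]

def AssouadCovers (s K : ℝ) : Prop :=
  ∀ ε : ℝ, 0 < ε → ε < 2 → ∀ r : ℝ, 0 < r → ∀ x : X,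
    ∃ c : Finset X, (c.card : ℝ) ≤ K * ε ^ (-s) ∧ closedBall x r ⊆ ⋃ y ∈ c, closedBall y (ε * r)

variable {X}

theorem assouadDim_le_ofReal {s K : ℝ} (hs : 0 < s) (hK : 0 < K) (h : AssouadCovers X s K) :
    assouadDim X ≤ ENNReal.ofReal s :=
  sInf_le ⟨s, hs, rfl, K, hK, h⟩

theorem ofReal_le_assouadDim {t : ℝ} (h : ∀ s K, 0 < s → 0 < K → AssouadCovers X s K → t ≤ s) :
    ENNReal.ofReal t ≤ assouadDim X :=
  le_sInf fun _ ⟨s, hs, hd, K, hK, hc⟩ => hd ▸ ENNReal.ofReal_le_ofReal (h s K hs hK hc)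

end Assouad

section SeqMetricSpace

variable {α : ℕ → ℝ}

theorem two_pow_mul_le_of_two_mul_succ_le (hhalf : ∀ n, 2 * α (n + 1) ≤ α n) (n j : ℕ) :
    2 ^ j * α (n + j) ≤ α n := by
  induction j with
  | zero => simp
  | succ j ih =>
    calc 2 ^ (j + 1) * α (n + (j + 1)) = 2 ^ j * (2 * α (n + j + 1)) := by ring_nf
      _ ≤ 2 ^ j * α (n + j) := by gcongr; exact hhalf _
      _ ≤ α n := ih

theorem exists_le_forall_lt_of_tendsto (hα : Tendsto α atTop (𝓝 0)) {r : ℝ} (hr : 0 < r) :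
    ∃ n, α n ≤ r ∧ ∀ i < n, r < α i := by
  classical
  have hex : ∃ n, α n ≤ r := (hα.eventually (ge_mem_nhds hr)).exists
  exact ⟨Nat.find hex, Nat.find_spec hex, fun i hi => not_le.1 (Nat.find_min hex hi)⟩

theorem closedBall_subset_cylinder (hα : IsShrinking α) {x : ℕ → Bool} {r : ℝ} {n : ℕ}
    (h : ∀ i < n, r < α i) :
    letI := seqMetricSpace α hα
    closedBall x r ⊆ cylinder x n :=
  fun _ hy i hi =>
    apply_eq_of_seqDist_lt hα.2.1 ((show seqDist α _ x ≤ r from hy).trans_lt (h i hi))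

theorem cylinder_subset_closedBall (hα : IsShrinking α) (x : ℕ → Bool) (n : ℕ) :
    letI := seqMetricSpace α hα
    cylinder x n ⊆ closedBall x (α n) :=
  fun _ hy => seqDist_le_of_mem_cylinder hα.2.1 (hα.1 n).le hy

theorem assouadDim_seqMetricSpace_le_one (hα : IsShrinking α)
    (hhalf : ∀ n, 2 * α (n + 1) ≤ α n) :
    @assouadDim _ (seqMetricSpace α hα) ≤ 1 := by
  let := seqMetricSpace α hα
  rw [← ENNReal.ofReal_one]
  refine assouadDim_le_ofReal one_pos two_pos fun ε hε hε2 r hr x => ?_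
  obtain ⟨n, hn, hlt⟩ := exists_le_forall_lt_of_tendsto hα.2.2 hr
  obtain ⟨j, hj, hj'⟩ := exists_nat_pow_near (x := 2 / ε) (y := (2 : ℝ))
    ((one_le_div hε).2 hε2.le) one_lt_two
  obtain ⟨c, hc, hcov⟩ := exists_finset_cylinder_cover x n j
  have hsmall : α (n + j) ≤ ε * r := by
    have h1 : 1 ≤ ε * 2 ^ j := by
      rw [div_lt_iff₀ hε, pow_succ] at hj'
      linarith
    have h2 := two_pow_mul_le_of_two_mul_succ_le hhalf n j
    nlinarith [hα.1 (n + j)]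
  refine ⟨c, ?_, ?_⟩
  · calc (c.card : ℝ) ≤ 2 ^ j := by exact_mod_cast hc
      _ ≤ 2 / ε := hj
      _ = 2 * ε ^ (-1 : ℝ) := by rw [Real.rpow_neg_one, div_eq_mul_inv]
  · refine (closedBall_subset_cylinder hα hlt).trans (hcov.trans ?_)
    exact Set.iUnion₂_mono fun z _ =>
      (cylinder_subset_closedBall hα z _).trans (closedBall_subset_closedBall hsmall)

theorem one_le_assouadDim_seqMetricSpace (hα : IsShrinking α) (hstrict : StrictAnti α)
    (hrun : ∀ k, ∃ N, α (N + k) = 2⁻¹ ^ k * α N) :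
    1 ≤ @assouadDim _ (seqMetricSpace α hα) := by
  let := seqMetricSpace α hα
  rw [← ENNReal.ofReal_one]
  refine ofReal_le_assouadDim fun s K _ _ hcov => ?_
  have hcount : ∀ k : ℕ, (2 : ℝ) ^ k ≤ K * (2 ^ s) ^ k := by
    intro k
    obtain ⟨N, hN⟩ := hrun k
    obtain ⟨c, hc, hball⟩ := hcov (2⁻¹ ^ k) (by positivity)
      ((pow_le_one₀ (by norm_num) (by norm_num)).trans_lt one_lt_two) (α N) (hα.1 N)
      (fun _ => false)
    have hcyl : cylinder (fun _ => false) N ⊆ ⋃ y ∈ c, cylinder y (N + k) := by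
      refine (cylinder_subset_closedBall hα _ N).trans (hball.trans ?_)
      refine Set.iUnion₂_mono fun y _ => ?_
      rw [← hN]
      exact closedBall_subset_cylinder hα fun i hi => hstrict hi
    calc (2 : ℝ) ^ k ≤ c.card := by
          exact_mod_cast (Fintype.card_bool ▸ card_pow_le_card_of_cylinder_cover hcyl)
      _ ≤ K * (2⁻¹ ^ k) ^ (-s) := hc
      _ = K * (2 ^ s) ^ k := by
          rw [inv_pow, Real.inv_rpow (by positivity), Real.rpow_neg (by positivity), inv_inv,
            ← Real.rpow_natCast_mul (by norm_num), mul_comm (k : ℝ),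
            Real.rpow_mul_natCast (by norm_num)]
  by_contra! hs
  have hlt : 1 < (2 : ℝ) / 2 ^ s := by
    rw [one_lt_div (by positivity)]
    simpa using Real.rpow_lt_rpow_of_exponent_lt one_lt_two hs
  obtain ⟨k, hk⟩ := pow_unbounded_of_one_lt K hlt
  rw [div_pow, lt_div_iff₀ (by positivity)] at hk
  linarith [hcount k]

end SeqMetricSpace

section Hausdorff

open MeasureTheory

variable {X : Type*} [EMetricSpace X] {ι : ℕ → Type*} [∀ k, Fintype (ι k)]

theorem hausdorffMeasure_eq_zero_of_finite_covers [MeasurableSpace X] [BorelSpace X]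
    {d : ℝ} (hd : 0 ≤ d) {s : Set X} {r : ℕ → ℝ≥0∞} (hr : Tendsto r atTop (𝓝 0))
    (t : ∀ k, ι k → Set X) (ht : ∀ k i, Metric.ediam (t k i) ≤ r k) (hst : ∀ k, s ⊆ ⋃ i, t k i)
    (hcount : Tendsto (fun k => (Fintype.card (ι k) : ℝ≥0∞) * r k ^ d) atTop (𝓝 0)) :
    μH[d] s = 0 := by
  refine le_antisymm ?_ bot_le
  calc μH[d] s ≤ liminf (fun k => ∑ i, Metric.ediam (t k i) ^ d) atTop :=
        Measure.hausdorffMeasure_le_liminf_sum d s r hr t (.of_forall ht) (.of_forall hst)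
    _ ≤ liminf (fun k => (Fintype.card (ι k) : ℝ≥0∞) * r k ^ d) atTop := by
        refine liminf_le_liminf (.of_forall fun k => ?_)
        calc ∑ i, Metric.ediam (t k i) ^ d ≤ ∑ _i : ι k, r k ^ d :=
              Finset.sum_le_sum fun i _ => ENNReal.rpow_le_rpow (ht k i) hd
          _ = _ := by simp
    _ = 0 := hcount.liminf_eq

theorem dimH_eq_zero_of_finite_covers {s : Set X} {r : ℕ → ℝ≥0∞} (hr : Tendsto r atTop (𝓝 0))
    (t : ∀ k, ι k → Set X) (ht : ∀ k i, Metric.ediam (t k i) ≤ r k) (hst : ∀ k, s ⊆ ⋃ i, t k i)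
    (hcount : ∀ d : ℝ≥0, 0 < d →
      Tendsto (fun k => (Fintype.card (ι k) : ℝ≥0∞) * r k ^ (d : ℝ)) atTop (𝓝 0)) :
    dimH s = 0 := by
  borelize X
  refine le_antisymm (ENNReal.le_of_forall_pos_le_add fun d hd _ => ?_) bot_le
  rw [zero_add, dimH_eq_iInf]
  exact iInf₂_le d
    (hausdorffMeasure_eq_zero_of_finite_covers d.coe_nonneg hr t ht hst (hcount d hd))

end Hausdorff

theorem hausdorffDim_seqMetricSpace_eq_zero {α : ℕ → ℝ} (hα : IsShrinking α) {N : ℕ → ℕ}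
    (hN : Tendsto N atTop atTop)
    (hsmall : ∀ d : ℝ, 0 < d → Tendsto (fun k => 2 ^ N k * α (N k) ^ d) atTop (𝓝 0)) :
    @hausdorffDim _ (seqMetricSpace α hα) = 0 := by
  let := seqMetricSpace α hα
  choose c hc hcov using fun k => exists_finset_cylinder_cover (fun _ => false) 0 (N k)
  refine dimH_eq_zero_of_finite_covers (r := fun k => ENNReal.ofReal (α (N k)))
    (ENNReal.ofReal_zero ▸ ENNReal.tendsto_ofReal (hα.2.2.comp hN))
    (fun k (z : c k) => cylinder z.1 (N k)) (fun k z => ?_) (fun k y _ => ?_) fun d hd => ?_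
  · refine Metric.ediam_le fun y hy y' hy' => ?_
    rw [edist_dist]
    refine ENNReal.ofReal_le_ofReal (seqDist_le_of_mem_cylinder hα.2.1 (hα.1 _).le ?_)
    exact fun i hi => (hy i hi).trans (hy' i hi).symm
  · obtain ⟨z, hz, hyz⟩ := Set.mem_iUnion₂.1 (hcov k (by simp : y ∈ cylinder _ 0))
    exact Set.mem_iUnion.2 ⟨⟨z, hz⟩, by simpa using hyz⟩
  · refine tendsto_of_tendsto_of_tendsto_of_le_of_le tendsto_const_nhds
      (ENNReal.ofReal_zero ▸ ENNReal.tendsto_ofReal (hsmall d hd)) (fun _ => bot_le) fun k => ?_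
    dsimp only
    rw [ENNReal.ofReal_mul (by positivity), ENNReal.ofReal_pow zero_le_two,
      ENNReal.ofReal_rpow_of_nonneg (hα.1 (N k)).le d.coe_nonneg, ENNReal.ofReal_ofNat]
    gcongr
    rw [Fintype.card_coe]
    exact_mod_cast Fintype.card_bool ▸ hc k

-- The exponent `n + ⌊√n⌋⁴` grows by exactly one along each block `[k², k² + 2k]` and jumps by
-- about `4k³` between blocks.
def theta (n : ℕ) : ℝ := 2⁻¹ ^ (n + n.sqrt ^ 4)

theorem theta_pos (n : ℕ) : 0 < theta n := by
  unfold theta; positivity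

theorem two_mul_theta_succ_le (n : ℕ) : 2 * theta (n + 1) ≤ theta n := by
  have hexp : n + n.sqrt ^ 4 + 1 ≤ n + 1 + (n + 1).sqrt ^ 4 := by
    have := Nat.pow_le_pow_left (Nat.sqrt_le_sqrt (Nat.le_add_right n 1)) 4
    omega
  calc 2 * theta (n + 1) ≤ 2 * 2⁻¹ ^ (n + n.sqrt ^ 4 + 1) := by
        unfold theta
        exact mul_le_mul_of_nonneg_left (pow_le_pow_of_le_one (by norm_num) (by norm_num) hexp)
          zero_le_two
    _ = theta n := by rw [theta, pow_succ]; ring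

theorem theta_strictAnti : StrictAnti theta :=
  strictAnti_nat_of_succ_lt fun n => by linarith [two_mul_theta_succ_le n, theta_pos (n + 1)]

theorem isShrinking_theta : IsShrinking theta := by
  refine ⟨theta_pos, fun _ _ h => theta_strictAnti.antitone h, ?_⟩
  refine squeeze_zero (fun n => (theta_pos n).le) (fun n => ?_)
    (tendsto_pow_atTop_nhds_zero_of_lt_one (by norm_num : (0 : ℝ) ≤ 2⁻¹) (by norm_num))
  exact pow_le_pow_of_le_one (by norm_num) (by norm_num) (Nat.le_add_right _ _)

theorem theta_sq_add (k : ℕ) {j : ℕ} (hj : j ≤ 2 * k) :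
    theta (k ^ 2 + j) = 2⁻¹ ^ j * theta (k ^ 2) := by
  rw [theta, theta, Nat.sqrt_add_eq' k (by omega), Nat.sqrt_eq', ← pow_add]
  ring_nf

theorem tendsto_two_pow_mul_theta_sq_rpow {d : ℝ} (hd : 0 < d) :
    Tendsto (fun k : ℕ => 2 ^ k ^ 2 * theta (k ^ 2) ^ d) atTop (𝓝 0) := by
  have hrw : ∀ k : ℕ, 2 ^ k ^ 2 * theta (k ^ 2) ^ d =
      (2 : ℝ) ^ ((k : ℝ) ^ 2 - d * ((k : ℝ) ^ 2 + (k : ℝ) ^ 4)) := by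
    intro k
    rw [theta, Nat.sqrt_eq', Real.rpow_sub two_pos, ← Real.rpow_natCast, inv_pow,
      Real.inv_rpow (by positivity), ← Real.rpow_natCast, ← Real.rpow_mul zero_le_two,
      div_eq_mul_inv]
    push_cast
    ring_nf
  simp_rw [hrw]
  refine (tendsto_rpow_atBot_of_base_gt_one 2 one_lt_two).comp ?_
  refine tendsto_atBot_mono' atTop ?_ (tendsto_neg_atTop_atBot.comp tendsto_natCast_atTop_atTop)
  filter_upwards [eventually_ge_atTop ⌈2 / d⌉₊, eventually_ge_atTop 1] with k hk hk1
  have hdk : 2 ≤ d * k := by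
    rw [Nat.ceil_le, div_le_iff₀ hd] at hk; linarith
  have hk1' : (1 : ℝ) ≤ k := by exact_mod_cast hk1
  simp only [Function.comp_apply]
  nlinarith [mul_le_mul_of_nonneg_right hdk (by positivity : (0 : ℝ) ≤ (k : ℝ) ^ 3),
    mul_pos hd (by positivity : (0 : ℝ) < (k : ℝ) ^ 2)]

theorem statement_18 :
    ∃ (θ : ℕ → ℝ) (hθ : IsShrinking θ),
      @hausdorffDim (ℕ → Bool) (seqMetricSpace θ hθ) = 0 ∧
      @assouadDim (ℕ → Bool) (seqMetricSpace θ hθ) = 1 := by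
  refine ⟨theta, isShrinking_theta, ?_, ?_⟩
  · exact hausdorffDim_seqMetricSpace_eq_zero isShrinking_theta
      (tendsto_pow_atTop two_ne_zero) fun _ => tendsto_two_pow_mul_theta_sq_rpow
  · refine le_antisymm (assouadDim_seqMetricSpace_le_one _ two_mul_theta_succ_le) ?_
    exact one_le_assouadDim_seqMetricSpace _ theta_strictAnti fun k =>
      ⟨k ^ 2, theta_sq_add k (by omega)⟩

end
end
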